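/- Fix γ ∈ (0,1) and μ > 0. For any function g : ℝ → ℝ ∪ {−∞}, any ξ ∈ ℝ, and all x ∈ ℝ, the identity Φ_ξ[g](x) + μ·max(ξ − x, 0) = 1 − γ + sup_{y∈ℝ} ( g(y) − |x − y| ) holds; consequently, if g is a concave traveling wave with speed v and phenotypic threshold s satisfying v < s, then the function Ψ[g](x) := 1 − γ + sup_{y∈ℝ} ( g(y) − |x − y| ) satisfies Ψ[g](v) > 0, and there exists x ∈ (v, s) with π(Ψ[g](x)) > 0. -/

import Mathlib

/-- `π(x) = x` if `x ≥ 0`, and `−∞` otherwise. -/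
noncomputable def piE (x : EReal) : EReal := if 0 ≤ x then x else ⊥

/-- Concavity for `ℝ ∪ {−∞}`-valued functions (modeled as `ℝ → EReal`). -/
def ConcaveE (h : ℝ → EReal) : Prop :=
  ∀ x x' t : ℝ, 0 ≤ t → t ≤ 1 →
    ((t : EReal) * h x + ((1 - t : ℝ) : EReal) * h x') ≤ h (t * x + (1 - t) * x')

/-- `Φ_ξ[g](x) = 1 − γ + sup_y ( g(y) − |x − y| ) − μ·max(ξ − x, 0)`. -/
noncomputable def Phi (γ μ : ℝ) (g : ℝ → EReal) (ξ x : ℝ) : EReal :=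
  ((1 - γ : ℝ) : EReal) + (⨆ y : ℝ, g y - ((|x - y| : ℝ) : EReal))
    - ((μ * max (ξ - x) 0 : ℝ) : EReal)

/-- The phenotypic threshold `s = sup{ ξ ∈ ℝ : sup_x Φ_ξ[g](x) ≥ γ }`. -/
noncomputable def sNext (γ μ : ℝ) (g : ℝ → EReal) : ℝ :=
  sSup {ξ : ℝ | (γ : EReal) ≤ ⨆ x : ℝ, Phi γ μ g ξ x}

/-- The deterministic dynamic: `g_n = π ∘ Φ_{s_n}[g_{n−1}]` with
`s_n = sNext γ μ g_{n−1}`. -/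
noncomputable def gIter (γ μ : ℝ) (g0 : ℝ → EReal) : ℕ → ℝ → EReal
  | 0 => g0
  | n + 1 => fun x =>
      piE (Phi γ μ (gIter γ μ g0 n) (sNext γ μ (gIter γ μ g0 n)) x)

/-- A concave `g` with `sup{x : g x > 0} = 0`, `L = inf{x : g x > 0} > −∞`
(and `g = −∞` outside `[L,0]`) is a traveling wave with speed `v` if the
dynamic has the effect of shifting `g` by `v` at every step. -/
def IsTravelingWave (γ μ : ℝ) (g : ℝ → EReal) (v L : ℝ) : Prop :=
  ConcaveE g ∧
  {x : ℝ | 0 < g x}.Nonempty ∧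
  BddBelow {x : ℝ | 0 < g x} ∧
  sSup {x : ℝ | 0 < g x} = 0 ∧
  sInf {x : ℝ | 0 < g x} = L ∧
  (∀ x : ℝ, x ∉ Set.Icc L 0 → g x = ⊥) ∧
  (∀ n : ℕ, 1 ≤ n → ∀ x : ℝ, gIter γ μ g n x = g (x - n * v))

/-- `Ψ[g](x) = 1 − γ + sup_y ( g(y) − |x − y| )`. -/
noncomputable def Psi (γ : ℝ) (g : ℝ → EReal) (x : ℝ) : EReal :=
  ((1 - γ : ℝ) : EReal) + ⨆ y : ℝ, g y - ((|x - y| : ℝ) : EReal)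

open Set

lemma piE_pos_iff {t : EReal} : 0 < piE t ↔ 0 < t := by
  unfold piE
  split_ifs with ht
  · rfl
  · exact iff_of_false (by simp) (not_lt.2 (le_of_not_ge ht))

lemma iSup_sub_dist_le_add_dist {α : Type*} [PseudoMetricSpace α] (g : α → EReal) (x y : α) :
    ⨆ z, g z - ((dist x z : ℝ) : EReal) ≤
      (⨆ z, g z - ((dist y z : ℝ) : EReal)) + ((dist x y : ℝ) : EReal) := by
  refine iSup_le fun z => ?_
  calc g z - ((dist x z : ℝ) : EReal)
      ≤ g z + ((-dist y z + dist x y : ℝ) : EReal) := by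
        rw [sub_eq_add_neg, ← EReal.coe_neg]
        gcongr
        linarith [dist_triangle_left y z x]
    _ = (g z - ((dist y z : ℝ) : EReal)) + (dist x y : ℝ) := by
        rw [EReal.coe_add, EReal.coe_neg, ← add_assoc, ← sub_eq_add_neg]
    _ ≤ _ := by gcongr; exact le_iSup (fun z => g z - ((dist y z : ℝ) : EReal)) z

section Psi

variable {γ μ : ℝ} {g : ℝ → EReal}

lemma Phi_add_eq_Psi (γ μ : ℝ) (g : ℝ → EReal) (ξ x : ℝ) :
    Phi γ μ g ξ x + ((μ * max (ξ - x) 0 : ℝ) : EReal) = Psi γ g x :=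
  EReal.sub_add_cancel

lemma lt_Psi_of_Phi_pos {ξ x : ℝ} (h : 0 < Phi γ μ g ξ x) :
    ((μ * max (ξ - x) 0 : ℝ) : EReal) < Psi γ g x := by
  rw [← Phi_add_eq_Psi]
  simpa using EReal.add_lt_add_right_coe h (μ * max (ξ - x) 0)

lemma Psi_le_add_abs (γ : ℝ) (g : ℝ → EReal) (x y : ℝ) :
    Psi γ g x ≤ Psi γ g y + ((|x - y| : ℝ) : EReal) := by
  simp only [Psi, ← Real.dist_eq, add_assoc]
  gcongr
  exact iSup_sub_dist_le_add_dist g x y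

lemma coe_sub_abs_lt_Psi {c x : ℝ} (h : (c : EReal) < Psi γ g x) (y : ℝ) :
    ((c - |x - y| : ℝ) : EReal) < Psi γ g y := by
  rw [EReal.coe_sub]
  exact EReal.sub_lt_of_lt_add (h.trans_le (Psi_le_add_abs γ g x y))

lemma exists_mem_Ioo_Psi_pos {a b : ℝ} (ha : 0 < Psi γ g a) (hab : a < b) :
    ∃ x ∈ Ioo a b, 0 < Psi γ g x := by
  obtain ⟨c, hc0, hca⟩ := EReal.lt_iff_exists_real_btwn.1 ha
  have hc : 0 < c := EReal.coe_pos.1 hc0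
  set t := min c (b - a) / 2 with ht_def
  have ht : 0 < t := by positivity
  have htc : t < c := by linarith [min_le_left c (b - a)]
  refine ⟨a + t, ⟨by linarith, by linarith [min_le_right c (b - a)]⟩, ?_⟩
  have hlt := coe_sub_abs_lt_Psi hca (a + t)
  rw [show |a - (a + t)| = t by rw [sub_add_cancel_left, abs_neg, abs_of_pos ht]] at hlt
  exact lt_trans (EReal.coe_pos.2 (sub_pos.2 htc)) hlt

end Psi

namespace IsTravelingWave

variable {γ μ v L : ℝ} {g : ℝ → EReal}

lemma nonpos_of_pos (hw : IsTravelingWave γ μ g v L) {y : ℝ} (hy : 0 < g y) : y ≤ 0 := by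
  by_contra hy0
  have : g y = ⊥ := hw.2.2.2.2.2.1 y fun h => hy0 h.2
  simp [this] at hy

lemma Phi_sNext_pos (hw : IsTravelingWave γ μ g v L) {y : ℝ} (hy : 0 < g y) :
    0 < Phi γ μ g (sNext γ μ g) (y + v) := by
  have hshift : piE (Phi γ μ g (sNext γ μ g) (y + v)) = g (y + v - (1 : ℕ) * v) :=
    hw.2.2.2.2.2.2 1 le_rfl (y + v)
  rw [Nat.cast_one, one_mul, add_sub_cancel_right] at hshift
  exact piE_pos_iff.1 (hshift ▸ hy)

/-- Take `y ≤ 0` close to `0` with `g y > 0`. The shift property gives `Φ_s[g](y + v) = g y > 0`,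
hence `Ψ(y + v) > μ (s - v - y)`, and `Ψ` is `1`-Lipschitz. -/
lemma Psi_pos (hw : IsTravelingWave γ μ g v L) (hμ : 0 < μ) (hvs : v < sNext γ μ g) :
    0 < Psi γ g v := by
  set s := sNext γ μ g
  have hgap : 0 < μ * (s - v) := mul_pos hμ (sub_pos.2 hvs)
  obtain ⟨y, hy, hy_gt⟩ := exists_lt_of_lt_csSup hw.2.1
    (show -(μ * (s - v)) < sSup {x : ℝ | 0 < g x} by rw [hw.2.2.2.1]; linarith)
  have hy0 : y ≤ 0 := hw.nonpos_of_pos hy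
  have hlt := coe_sub_abs_lt_Psi (lt_Psi_of_Phi_pos (hw.Phi_sNext_pos hy)) v
  refine lt_trans (EReal.coe_pos.2 ?_) hlt
  rw [add_sub_cancel_right, abs_of_nonpos hy0]
  nlinarith [le_max_left (s - (y + v)) 0]

end IsTravelingWave

theorem Psi_identity_and_positivity_general (γ μ : ℝ) (hμ : 0 < μ) :
    (∀ (g : ℝ → EReal) (ξ x : ℝ),
      Phi γ μ g ξ x + ((μ * max (ξ - x) 0 : ℝ) : EReal) = Psi γ g x) ∧
    (∀ (g : ℝ → EReal) (v L : ℝ), IsTravelingWave γ μ g v L →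
      v < sNext γ μ g →
        (0 : EReal) < Psi γ g v ∧
        ∃ x ∈ Set.Ioo v (sNext γ μ g), (0 : EReal) < piE (Psi γ g x)) := by
  refine ⟨Phi_add_eq_Psi γ μ, fun g v L hw hvs => ?_⟩
  have hv := hw.Psi_pos hμ hvs
  obtain ⟨x, hx, hx_pos⟩ := exists_mem_Ioo_Psi_pos hv hvs
  exact ⟨hv, x, hx, piE_pos_iff.2 hx_pos⟩

/-- the identity `Φ_ξ[g](x) + μ·max(ξ − x, 0) = Ψ[g](x)` holds
for all `g`, `ξ`, `x`; consequently, for a concave traveling wave `g` with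
speed `v` and phenotypic threshold `s = sNext γ μ g` satisfying `v < s`, one
has `Ψ[g](v) > 0` and there is `x ∈ (v, s)` with `π(Ψ[g](x)) > 0`. -/
theorem Psi_identity_and_positivity (γ μ : ℝ) (hγ : γ ∈ Set.Ioo (0 : ℝ) 1)
    (hμ : 0 < μ) :
    (∀ (g : ℝ → EReal) (ξ x : ℝ),
      Phi γ μ g ξ x + ((μ * max (ξ - x) 0 : ℝ) : EReal) = Psi γ g x) ∧
    (∀ (g : ℝ → EReal) (v L : ℝ), IsTravelingWave γ μ g v L →
      v < sNext γ μ g →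
        (0 : EReal) < Psi γ g v ∧
        ∃ x ∈ Set.Ioo v (sNext γ μ g), (0 : EReal) < piE (Psi γ g x)) :=
  Psi_identity_and_positivity_general γ μ hμ
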